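/- For a ≥ 7, the values of the irreducible characters of S_{2a+4} indexed by (a+2, a-1, 3) and by (a+2, 4, 3, 1^{a-5}) at the conjugacy class of cycle type (a, a-1, 4, 1) both equal 0. -/

import Mathlib

/-!
Both values are expanded with the Murnaghan–Nakayama rule on beta-sets. In each case the
`a`-cycle can be removed as a rim hook in exactly two ways, and each of the two resulting
characters of `S_{a+4}` is evaluated at `(a - 1, 4, 1)` by removing one further hook; the two
contributions have equal size and opposite signs.
-/

/-- The beta-set (set of first-column hook lengths) of a partition given as a
weakly decreasing list of parts. -/
def betaSet (l : List ℕ) : List ℕ :=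
  ((List.range l.length).zip l).map (fun p => p.2 + (l.length - 1 - p.1))

/-- Recover a partition (weakly decreasing list of positive parts) from a
list of distinct beta-numbers. -/
def fromBeta (b : List ℕ) : List ℕ :=
  let s := List.insertionSort (· ≥ ·) b
  (((List.range s.length).zip s).map (fun p => p.2 - (s.length - 1 - p.1))).filter (fun x => x ≠ 0)

/-- `MN β γ` is the value of the irreducible character of the symmetric group
indexed by the partition `β` at the conjugacy class of cycle type `γ`,
computed via the Murnaghan–Nakayama rule (phrased in terms of beta-numbers:
removing a rim hook of length `q` replaces a beta-number `x` by `x - q`,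
the sign being `(-1)` to the number of beta-numbers strictly between
`x - q` and `x`, i.e. the leg length of the hook). -/
def MN : List ℕ → List ℕ → ℤ
  | β, [] => if β = [] then 1 else 0
  | β, q :: γ =>
      ((betaSet β).map (fun x =>
        if q ≤ x ∧ x - q ∉ betaSet β then
          (-1) ^ ((betaSet β).filter (fun y => x - q < y ∧ y < x)).length *
            MN (fromBeta ((x - q) :: (betaSet β).erase x)) γ
        else 0)).sum

/-- `l` is a partition of `m`: a weakly decreasing list of positive parts
summing to `m`. -/
def IsPartition (l : List ℕ) (m : ℕ) : Prop :=
  l.Pairwise (· ≥ ·) ∧ (∀ i ∈ l, 0 < i) ∧ l.sum = m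

/-- The conjugate (transpose) partition: `(conjugate l)_i = #{j : l_j > i}`. -/
def conjugate (l : List ℕ) : List ℕ :=
  (List.range (l.foldr max 0)).map (fun i => (l.filter (fun p => i < p)).length)

theorem betaSet_nil : betaSet [] = [] := rfl

theorem betaSet_cons (c : ℕ) (l : List ℕ) :
    betaSet (c :: l) = (c + l.length) :: betaSet l := by
  simp only [betaSet, List.length_cons, List.range_succ_eq_map, List.zip_cons_cons,
    List.map_cons, List.zip_map_left, List.map_map, Nat.sub_zero, Nat.add_sub_cancel]
  congr 1
  refine List.map_congr_left fun p hp => ?_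
  have := (List.of_mem_zip hp).1
  simp only [List.mem_range] at this
  simp only [Function.comp_apply, Prod.map_fst, Prod.map_snd, id]
  omega

theorem length_betaSet (l : List ℕ) : (betaSet l).length = l.length := by
  simp [betaSet]

theorem getElem_betaSet (l : List ℕ) (i : ℕ) (h : i < (betaSet l).length) :
    (betaSet l)[i] = l[i]'(by simpa [length_betaSet] using h) + (l.length - 1 - i) := by
  simp [betaSet, List.getElem_zip]

theorem lt_of_mem_betaSet {l : List ℕ} {c y : ℕ} (hl : ∀ p ∈ l, p ≤ c)
    (hy : y ∈ betaSet l) :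
    y < c + l.length := by
  induction l with
  | nil => simp [betaSet_nil] at hy
  | cons p l ih =>
    rw [betaSet_cons, List.mem_cons] at hy
    simp only [List.mem_cons, forall_eq_or_imp] at hl
    rcases hy with rfl | hy
    · simp only [List.length_cons]; omega
    · have := ih hl.2 hy; simp only [List.length_cons]; omega

theorem pairwise_betaSet {l : List ℕ} (hl : l.Pairwise (· ≥ ·)) :
    (betaSet l).Pairwise (· > ·) := by
  induction l with
  | nil => exact List.Pairwise.nil
  | cons c l ih =>
    rw [List.pairwise_cons] at hl
    rw [betaSet_cons, List.pairwise_cons]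
    exact ⟨fun y hy => lt_of_mem_betaSet hl.1 hy, ih hl.2⟩

/-- Removing a hook that ends at the beta-number `0` leaves the beta-set of a partition padded
with zero parts, hence the filter. -/
theorem fromBeta_of_perm_betaSet {B l : List ℕ} (hl : l.Pairwise (· ≥ ·))
    (hB : B.Perm (betaSet l)) : fromBeta B = l.filter (· ≠ 0) := by
  have hsort : List.insertionSort (· ≥ ·) B = betaSet l :=
    List.Perm.eq_of_pairwise' (List.pairwise_insertionSort _ B)
      ((pairwise_betaSet hl).imp le_of_lt) ((List.perm_insertionSort _ B).trans hB)
  simp only [fromBeta, hsort]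
  congr 1
  refine List.ext_getElem (by simp [length_betaSet]) fun i h _ => ?_
  simp only [List.getElem_map, List.getElem_zip, List.getElem_range, getElem_betaSet,
    length_betaSet]
  omega

theorem betaSet_replicate (k c : ℕ) :
    betaSet (List.replicate k c) = (List.range k).reverse.map (· + c) := by
  induction k with
  | zero => rfl
  | succ k ih => simp [List.replicate_succ, betaSet_cons, ih, List.range_succ, add_comm]

theorem mem_betaSet_replicate {k c y : ℕ} :
    y ∈ betaSet (List.replicate k c) ↔ c ≤ y ∧ y < k + c := by
  rw [betaSet_replicate]
  simp only [List.mem_map, List.mem_reverse, List.mem_range]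
  exact ⟨by rintro ⟨j, hj, rfl⟩; omega, fun h => ⟨y - c, by omega, by omega⟩⟩

theorem cons_zero_append_betaSet_replicate_one_perm (l : List ℕ) (k : ℕ) :
    (0 :: (l ++ betaSet (List.replicate k 1))).Perm (l ++ betaSet (List.replicate (k + 1) 0)) := by
  refine List.perm_middle.symm.trans (List.Perm.append_left l ?_)
  rw [betaSet_replicate, betaSet_replicate, List.range_succ_eq_map]
  simp only [List.map_reverse, List.reverse_cons, List.map_append, List.map_map]
  exact (List.perm_append_singleton _ _).symm.trans (by simp [Function.comp_def])

theorem filter_betaSet_replicate_of_forall {k c : ℕ} {p : ℕ → Bool}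
    (hp : ∀ y, c ≤ y → y < k + c → p y) :
    (betaSet (List.replicate k c)).filter p = betaSet (List.replicate k c) :=
  List.filter_eq_self.2 fun y hy =>
    hp y (mem_betaSet_replicate.1 hy).1 (mem_betaSet_replicate.1 hy).2

theorem filter_betaSet_replicate_of_forall_not {k c : ℕ} {p : ℕ → Bool}
    (hp : ∀ y, c ≤ y → y < k + c → ¬p y) : (betaSet (List.replicate k c)).filter p = [] :=
  List.filter_eq_nil_iff.2 fun y hy =>
    hp y (mem_betaSet_replicate.1 hy).1 (mem_betaSet_replicate.1 hy).2

def hookTerm (B : List ℕ) (q : ℕ) (γ : List ℕ) (x : ℕ) : ℤ :=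
  if q ≤ x ∧ x - q ∉ B then
    (-1) ^ (B.filter (fun y => x - q < y ∧ y < x)).length *
      MN (fromBeta ((x - q) :: B.erase x)) γ
  else 0

theorem MN_cons (β : List ℕ) (q : ℕ) (γ : List ℕ) :
    MN β (q :: γ) = ((betaSet β).map (hookTerm (betaSet β) q γ)).sum := by
  rw [MN]; rfl

theorem hookTerm_of_lt {B γ : List ℕ} {q x : ℕ} (hlt : x < q) : hookTerm B q γ x = 0 :=
  if_neg fun h => absurd h.1 (Nat.not_le.2 hlt)

theorem hookTerm_of_mem {B γ : List ℕ} {q x : ℕ} (hmem : x - q ∈ B) :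
    hookTerm B q γ x = 0 :=
  if_neg fun h => h.2 hmem

theorem hookTerm_of_perm_betaSet {B γ l : List ℕ} {q x n : ℕ} (hqx : q ≤ x)
    (hx : x - q ∉ B)
    (hleg : (B.filter (fun y => x - q < y ∧ y < x)).length = n)
    (hl : l.Pairwise (· ≥ ·)) (hperm : ((x - q) :: B.erase x).Perm (betaSet l)) :
    hookTerm B q γ x = (-1) ^ n * MN (l.filter (· ≠ 0)) γ := by
  rw [hookTerm, if_pos ⟨hqx, hx⟩, hleg, fromBeta_of_perm_betaSet hl hperm]

theorem sum_map_hookTerm_of_forall_lt {B T γ : List ℕ} {q : ℕ} (hT : ∀ x ∈ T, x < q) :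
    (T.map (hookTerm B q γ)).sum = 0 :=
  List.sum_eq_zero fun _ hz => by
    obtain ⟨x, hx, rfl⟩ := List.mem_map.1 hz
    exact hookTerm_of_lt (hT x hx)

theorem MN_three_two : MN [3, 2] [4, 1] = -1 := by decide +kernel

theorem MN_two_two_one : MN [2, 2, 1] [4, 1] = 1 := by decide +kernel

theorem MN_add_six_two (c : ℕ) : MN [c + 6, 2] [c + 3, 4, 1] = -1 := by
  have hB : betaSet [c + 6, 2] = [c + 7, 2] := by simp [betaSet_cons, betaSet_nil]
  rw [MN_cons, hB]
  simp only [List.map_cons, List.map_nil, List.sum_cons, List.sum_nil]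
  rw [hookTerm_of_perm_betaSet (l := [3, 2]) (n := 0) (by omega) (by simp) (by simp) (by simp)
      (by simp [betaSet_cons, betaSet_nil]),
    hookTerm_of_lt (by omega)]
  simpa using MN_three_two

theorem MN_add_four_three_three (c : ℕ) : MN [c + 4, 3, 3] [c + 5, 4, 1] = 1 := by
  have hB : betaSet [c + 4, 3, 3] = [c + 6, 4, 3] := by simp [betaSet_cons, betaSet_nil]
  rw [MN_cons, hB]
  simp only [List.map_cons, List.map_nil, List.sum_cons, List.sum_nil]
  rw [hookTerm_of_perm_betaSet (l := [2, 2, 1]) (n := 2) (by omega) (by simp) (by simp) (by simp)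
      (by simp [betaSet_cons, betaSet_nil]; decide),
    hookTerm_of_lt (by omega), hookTerm_of_lt (by omega)]
  simpa using MN_two_two_one

theorem MN_add_eight_add_five_three_eq_zero (c : ℕ) :
    MN [c + 8, c + 5, 3] [c + 6, c + 5, 4, 1] = 0 := by
  have hB : betaSet [c + 8, c + 5, 3] = [c + 10, c + 6, 3] := by simp [betaSet_cons, betaSet_nil]
  rw [MN_cons, hB]
  simp only [List.map_cons, List.map_nil, List.sum_cons, List.sum_nil]
  rw [hookTerm_of_perm_betaSet (l := [c + 4, 3, 3]) (n := 1) (by omega) (by simp) (by simp)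
      (by simp) (by simpa [betaSet_cons, betaSet_nil] using List.Perm.swap (c + 6) 4 [3]),
    hookTerm_of_perm_betaSet (l := [c + 8, 2, 0]) (n := 1) (by omega) (by simp) (by simp)
      (by simp)
      (by simpa [betaSet_cons, betaSet_nil] using (List.perm_append_singleton 0 [c + 10, 3]).symm),
    hookTerm_of_lt (by omega)]
  have hTwoParts : MN [c + 8, 2] [c + 5, 4, 1] = -1 := MN_add_six_two (c + 2)
  simp [MN_add_four_three_three, hTwoParts]

theorem betaSet_three_three_three_ones (k : ℕ) :
    betaSet (3 :: 3 :: 3 :: List.replicate k 1) =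
      (k + 5) :: (k + 4) :: (k + 3) :: betaSet (List.replicate k 1) := by
  simp only [betaSet_cons, List.length_cons, List.length_replicate, List.cons.injEq, and_true]
  omega

theorem MN_three_three_three_ones (k : ℕ) (hk : 1 ≤ k) :
    MN (3 :: 3 :: 3 :: List.replicate k 1) [k + 4, 4, 1] = (-1) ^ k := by
  rw [MN_cons, betaSet_three_three_three_ones]
  simp only [List.map_cons, List.sum_cons]
  rw [hookTerm_of_mem (by simp [mem_betaSet_replicate]; omega),
    hookTerm_of_perm_betaSet (l := 3 :: 2 :: List.replicate (k + 1) 0) (n := k + 1) (by omega)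
      (by simp [mem_betaSet_replicate]) ?leg (by simp) ?perm,
    hookTerm_of_lt (by omega),
    sum_map_hookTerm_of_forall_lt (by simp [mem_betaSet_replicate]; omega)]
  · simp [MN_three_two, pow_succ]
  case leg =>
    simp (disch := omega) only [List.filter_cons, if_pos, if_neg, decide_eq_true_eq]
    rw [filter_betaSet_replicate_of_forall fun y h1 h2 => by simp; omega, List.length_cons,
      length_betaSet, List.length_replicate]
  case perm =>
    convert cons_zero_append_betaSet_replicate_one_perm [k + 5, k + 3] k using 1
    · simp
    · simp [betaSet_cons]; omega

theorem MN_add_seven_four_three_ones_eq_zero (k : ℕ) (hk : 1 ≤ k) :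
    MN ((k + 7) :: 4 :: 3 :: List.replicate k 1) [k + 5, k + 4, 4, 1] = 0 := by
  have hB : betaSet ((k + 7) :: 4 :: 3 :: List.replicate k 1) =
      (2 * k + 9) :: (k + 5) :: (k + 3) :: betaSet (List.replicate k 1) := by
    simp only [betaSet_cons, List.length_cons, List.length_replicate, List.cons.injEq, and_true]
    omega
  rw [MN_cons, hB]
  simp only [List.map_cons, List.sum_cons]
  rw [hookTerm_of_perm_betaSet (l := 3 :: 3 :: 3 :: List.replicate k 1) (n := 1) (by omega)
      (by simp [mem_betaSet_replicate]; omega) ?leg₁ (by simp) ?perm₁,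
    hookTerm_of_perm_betaSet (l := (k + 7) :: 2 :: List.replicate (k + 1) 0) (n := k + 1)
      (by omega) (by simp [mem_betaSet_replicate]) ?leg₂ (by simp) ?perm₂,
    hookTerm_of_lt (by omega),
    sum_map_hookTerm_of_forall_lt (by simp [mem_betaSet_replicate]; omega)]
  · have hTwoParts : MN [k + 7, 2] [k + 4, 4, 1] = -1 := MN_add_six_two (k + 1)
    simp [MN_three_three_three_ones k hk, hTwoParts, pow_succ]
  case leg₁ =>
    simp (disch := omega) only [List.filter_cons, if_pos, if_neg, decide_eq_true_eq]
    rw [filter_betaSet_replicate_of_forall_not fun y h1 h2 => by simp; omega]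
    rfl
  case perm₁ =>
    rw [betaSet_three_three_three_ones, List.erase_cons_head,
      show 2 * k + 9 - (k + 5) = k + 4 by omega]
    exact List.Perm.swap (k + 5) (k + 4) ((k + 3) :: betaSet (List.replicate k 1))
  case leg₂ =>
    simp (disch := omega) only [List.filter_cons, if_pos, if_neg, decide_eq_true_eq]
    rw [filter_betaSet_replicate_of_forall fun y h1 h2 => by simp; omega, List.length_cons,
      length_betaSet, List.length_replicate]
  case perm₂ =>
    rw [List.erase_cons_tail (by simp; omega), List.erase_cons_head]
    convert cons_zero_append_betaSet_replicate_one_perm [2 * k + 9, k + 3] k using 1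
    · simp
    · simp [betaSet_cons]; omega

/-- For `a ≥ 7`, the irreducible characters of `S_{2a+4}` indexed by
`(a+2, a-1, 3)` and by `(a+2, 4, 3, 1^{a-5})` both vanish at the class of
cycle type `(a, a-1, 4, 1)`. -/
theorem stmt_12 (a : ℕ) (ha : 7 ≤ a) :
    MN [a + 2, a - 1, 3] [a, a - 1, 4, 1] = 0 ∧
    MN ((a + 2) :: 4 :: 3 :: List.replicate (a - 5) 1) [a, a - 1, 4, 1] = 0 := by
  obtain ⟨c, rfl⟩ := Nat.exists_eq_add_of_le' (show 6 ≤ a by omega)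
  constructor
  · simpa using MN_add_eight_add_five_three_eq_zero c
  · simpa using MN_add_seven_four_three_ones_eq_zero (c + 1) (by omega)
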